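/- If (k₁,k₂) is generic, then for every partition μ of n the point λ = λ(μ,k) ∈ ℝⁿ is a residual point for (Bₙ,k); that is, the number of roots α ∈ R(Bₙ) with α(λ) = k(α) exceeds the number of roots α ∈ R(Bₙ) with α(λ) = 0 by exactly n. -/

import Mathlib

/- STATEMENT 16: For the root system `R(Bₙ) ⊂ (ℝⁿ)*` of type `Bₙ` (long roots `±e_i ± e_j`,
short roots `±e_i`) with generic parameters `k(long) = k₁`, `k(short) = k₂`, every point
`λ(μ, k)` attached to a partition `μ` of `n` is a residual point: the number of roots `α`
with `α(λ) = k(α)` exceeds the number of roots `α` with `α(λ) = 0` by exactly `n`. -/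

noncomputable section
open Classical

/-- The coordinate vector `e_i ∈ ℝⁿ`, regarded as the coordinate functional on `ℝⁿ`. -/
def stdE (n : ℕ) (i : Fin n) : Fin n → ℝ := Pi.single i 1

/-- The root system of type `Bₙ`: the long roots `±e_i ± e_j` (`i ≠ j`) and the short
roots `±e_i`. -/
def rootsBn (n : ℕ) : Set (Fin n → ℝ) :=
  {v | (∃ i j : Fin n, i ≠ j ∧
          (v = stdE n i + stdE n j ∨ v = stdE n i - stdE n j ∨ v = -(stdE n i + stdE n j)))
    ∨ (∃ i : Fin n, v = stdE n i ∨ v = -stdE n i)}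

/-- The parameter function: `k₂` on short roots, `k₁` on long roots. -/
def kBn (n : ℕ) (k₁ k₂ : ℝ) (v : Fin n → ℝ) : ℝ :=
  if ∃ i : Fin n, v = stdE n i ∨ v = -stdE n i then k₂ else k₁

/-- Evaluation `α(λ)` of the functional `α` at the point `λ`. -/
def evalRoot (n : ℕ) (α lam : Fin n → ℝ) : ℝ := ∑ i, α i * lam i

/-- Genericity of the parameters `(k₁, k₂)` for `Bₙ`. -/
def BnGeneric (n : ℕ) (k₁ k₂ : ℝ) : Prop :=
  k₁ * k₂ * ∏ j ∈ Finset.Icc 1 (2 * (n - 1)),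
    (((j : ℝ) * k₁ + 2 * k₂) * ((j : ℝ) * k₁ - 2 * k₂)) ≠ 0

/-- `l` is the list of column lengths `μ₁ ≥ μ₂ ≥ … ≥ μ_d > 0` of a partition of `n`. -/
def IsPartitionOf (n : ℕ) (l : List ℕ) : Prop :=
  l.Pairwise (· ≥ ·) ∧ (∀ p ∈ l, 0 < p) ∧ l.sum = n

/-- The multiset of the numbers `h(b)·k₁ + k₂ = (j - i)·k₁ + k₂` over the boxes `b` of the
Young diagram whose `i`-th column has `l_i` boxes (indices starting from `0`). -/
def heightCoords (k₁ k₂ : ℝ) (l : List ℕ) : Multiset ℝ :=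
  ↑(l.zipIdx.flatMap fun p => (List.range p.1).map fun j => ((j : ℝ) - (p.2 : ℝ)) * k₁ + k₂)

/-- `x` is a vector `λ(μ, k) ∈ ℝⁿ` attached to the partition `μ = l`. -/
def IsLambdaVec (n : ℕ) (k₁ k₂ : ℝ) (l : List ℕ) (x : Fin n → ℝ) : Prop :=
  (↑(List.ofFn x) : Multiset ℝ) = heightCoords k₁ k₂ l

open Finset

/-! Write `λ = (h_b k₁ + k₂)_b` with `h_b` the integer box heights. Genericity, together with the
fact that each of the extreme heights `±(n - 1)` is attained by at most one box, rules out every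
coincidence `α(λ) = k(α)` or `α(λ) = 0` except three kinds: `e_b(λ) = k₂` for boxes of height `0`,
`(e_b - e_c)(λ) = k₁` for `h_b = h_c + 1`, and `(e_b - e_c)(λ) = 0` for distinct boxes of equal
height. Adding the `n` diagonal pairs `(b, b)` to the last kind, the theorem becomes the identity
`#{(b, c) | h_b = h_c} = #{b | h_b = 0} + #{(b, c) | h_b = h_c + 1}`. It is proved by induction
on the columns, adding a column at least as long as all others: its cross terms with the old
columns telescope along the new column. -/

/-- Pairs `(a, b) ∈ M × N` with `a = b + r`, counted with multiplicity. -/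
def pairCount (M N : Multiset ℤ) (r : ℤ) : ℕ := (N.map fun b => M.count (b + r)).sum

section pairCount

variable (M M' N N' : Multiset ℤ) (r s : ℤ)

lemma pairCount_add_left : pairCount (M + M') N r = pairCount M N r + pairCount M' N r := by
  simp only [pairCount, Multiset.count_add, Multiset.sum_map_add]

lemma pairCount_add_right : pairCount M (N + N') r = pairCount M N r + pairCount M N' r := by
  simp only [pairCount, Multiset.map_add, Multiset.sum_add]

lemma pairCount_comm : pairCount M N r = pairCount N M (-r) := by
  induction N using Multiset.induction with
  | empty => simp [pairCount]
  | cons b N ih =>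
    have hb : (M.map fun a => if a + -r = b then 1 else 0).sum = M.count (b + r) := by
      rw [Multiset.sum_map_eq_nsmul_single (b + r) fun a ha _ => if_neg (by omega)]
      simp
    simp only [pairCount, Multiset.map_cons, Multiset.sum_cons, Multiset.count_cons] at ih ⊢
    rw [Multiset.sum_map_add, hb, ih, add_comm]

lemma count_map_sub (a : ℤ) : (M.map (· - s)).count a = M.count (a + s) := by
  rw [← Multiset.count_map_eq_count' (· - s) M (sub_left_injective), add_sub_cancel_right]

lemma pairCount_map_sub_left : pairCount (M.map (· - s)) N r = pairCount M N (r + s) := by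
  simp only [pairCount, count_map_sub, add_assoc]

lemma pairCount_map_sub_right : pairCount M (N.map (· - s)) r = pairCount M N (r - s) := by
  simp only [pairCount, Multiset.map_map, Function.comp_def, sub_add_eq_add_sub, add_sub_assoc]

lemma pairCount_map_sub : pairCount (M.map (· - s)) (M.map (· - s)) r = pairCount M M r := by
  rw [pairCount_map_sub_left, pairCount_map_sub_right, add_sub_cancel_right]

end pairCount

lemma count_map_univ {ι : Type*} [Fintype ι] (h : ι → ℤ) (a : ℤ) :
    (univ.val.map h).count a = #{i | h i = a} := by
  rw [Multiset.count_map, card_def, filter_val]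
  simp only [eq_comm]

lemma pairCount_map_univ {ι : Type*} [Fintype ι] (f g : ι → ℤ) (r : ℤ) :
    pairCount (univ.val.map f) (univ.val.map g) r = #{q : ι × ι | f q.1 = g q.2 + r} := by
  rw [pairCount, Multiset.map_map, sum_map_val, card_filter, Fintype.sum_prod_type_right]
  refine sum_congr rfl fun j _ => ?_
  rw [Function.comp_apply, count_map_univ, card_filter]

lemma card_filter_eq_card_filter_ne_add {ι : Type*} [Fintype ι] [DecidableEq ι] (f : ι → ℤ) :
    #{q : ι × ι | f q.1 = f q.2} = #{q : ι × ι | q.1 ≠ q.2 ∧ f q.1 = f q.2} + Fintype.card ι := by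
  rw [← card_filter_add_card_filter_not (s := ({q | f q.1 = f q.2} : Finset (ι × ι)))
    (fun q => q.1 ≠ q.2), filter_filter, filter_filter]
  congr 1
  · simp only [and_comm]
  · rw [← card_univ, ← diag_card univ]
    congr 1
    ext ⟨a, b⟩
    simp only [mem_filter, mem_univ, true_and, mem_diag, not_not]
    exact ⟨And.right, fun h => ⟨congrArg f h, h⟩⟩

def columnHeights (p : ℕ) : Multiset ℤ := (Multiset.range p).map (↑)

lemma pairCount_columnHeights (M : Multiset ℤ) (p : ℕ) (r : ℤ) :
    pairCount M (columnHeights p) r = ∑ j ∈ range p, M.count (j + r) := by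
  simp only [pairCount, columnHeights, Multiset.map_map]
  rfl

lemma pairCount_columnHeights_succ (M : Multiset ℤ) (p : ℕ) (r : ℤ) :
    pairCount M (columnHeights p) (r + 1) + M.count r =
      pairCount M (columnHeights p) r + M.count (p + r) := by
  have h := (sum_range_succ' (fun j : ℕ => M.count (j + r)) p).symm.trans
    (sum_range_succ (fun j : ℕ => M.count (j + r)) p)
  simpa [pairCount_columnHeights, add_assoc, add_comm (1 : ℤ)] using h

/-- The box heights `j - i` of the Young diagram whose `i`-th column has `l_i` boxes: prepending
a column shifts all old columns one step to the right. -/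
def boxHeights : List ℕ → Multiset ℤ
  | [] => 0
  | p :: l => columnHeights p + (boxHeights l).map (· - 1)

lemma count_columnHeights_self (p : ℕ) : (columnHeights p).count (p : ℤ) = 0 :=
  Multiset.count_eq_zero.mpr <| by simp [columnHeights]

lemma lt_of_mem_boxHeights {l : List ℕ} {p : ℕ} (hl : ∀ q ∈ l, q ≤ p) {a : ℤ}
    (ha : a ∈ boxHeights l) : a < p := by
  induction l generalizing a with
  | nil => simp [boxHeights] at ha
  | cons q l ih =>
    simp only [boxHeights, columnHeights, Multiset.mem_add, Multiset.mem_map,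
      Multiset.mem_range] at ha
    have hq := hl q List.mem_cons_self
    rcases ha with ⟨j, hj, rfl⟩ | ⟨b, hb, rfl⟩
    · omega
    · have := ih (fun q' hq' => hl q' (List.mem_cons_of_mem q hq')) hb
      omega

theorem pairCount_boxHeights {l : List ℕ} (hl : l.Pairwise (· ≥ ·)) :
    pairCount (boxHeights l) (boxHeights l) 0 =
      (boxHeights l).count 0 + pairCount (boxHeights l) (boxHeights l) 1 := by
  induction l with
  | nil => simp [boxHeights, pairCount]
  | cons p l ih =>
    obtain ⟨hp, hl⟩ := List.pairwise_cons.mp hl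
    simp only [boxHeights] at ih ⊢
    set H := boxHeights l
    -- the old heights are `< p`, so the boundary terms of the telescoping sums vanish
    have hHp (t : ℤ) (ht : p ≤ t) : H.count t = 0 :=
      Multiset.count_eq_zero.mpr fun h => (lt_of_mem_boxHeights hp h).not_ge ht
    have hR : pairCount (columnHeights p) (columnHeights p) 1 + (columnHeights p).count 0 =
        pairCount (columnHeights p) (columnHeights p) 0 := by
      simpa [count_columnHeights_self] using pairCount_columnHeights_succ (columnHeights p) p 0
    have hE₀ : pairCount (H.map (· - 1)) (columnHeights p) 1 + H.count 1 =
        pairCount (H.map (· - 1)) (columnHeights p) 0 := by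
      simpa [count_map_sub, hHp (p + 1) (by omega)] using
        pairCount_columnHeights_succ (H.map (· - 1)) p 0
    have hE₁ : pairCount (H.map (· - 1)) (columnHeights p) 0 + H.count 0 =
        pairCount (H.map (· - 1)) (columnHeights p) (-1) := by
      simpa [count_map_sub, hHp p le_rfl] using
        pairCount_columnHeights_succ (H.map (· - 1)) p (-1)
    simp only [pairCount_add_left, pairCount_add_right, Multiset.count_add, pairCount_map_sub,
      count_map_sub, zero_add]
    rw [pairCount_comm (columnHeights p) (H.map _) 0, pairCount_comm (columnHeights p) (H.map _) 1,
      ih hl, neg_zero]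
    omega

lemma count_columnHeights_le_one (p : ℕ) (a : ℤ) : (columnHeights p).count a ≤ 1 :=
  Multiset.nodup_iff_count_le_one.mp ((Multiset.nodup_range p).map Nat.cast_injective) a

lemma neg_length_lt_of_mem_boxHeights {l : List ℕ} {a : ℤ} (ha : a ∈ boxHeights l) :
    -(l.length : ℤ) < a := by
  induction l generalizing a with
  | nil => simp [boxHeights] at ha
  | cons q l ih =>
    simp only [boxHeights, columnHeights, Multiset.mem_add, Multiset.mem_map,
      Multiset.mem_range] at ha
    rcases ha with ⟨j, -, rfl⟩ | ⟨b, hb, rfl⟩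
    · simp only [List.length_cons]
      omega
    · have := ih hb
      simp only [List.length_cons]
      omega

lemma count_boxHeights_sub_one_le {l : List ℕ} {p : ℕ} (hl : ∀ q ∈ l, q ≤ p) :
    (boxHeights l).count ((p : ℤ) - 1) ≤ 1 := by
  cases l with
  | nil => simp [boxHeights]
  | cons q l =>
    have hl' : (boxHeights l).count (p : ℤ) = 0 := Multiset.count_eq_zero.mpr fun h =>
      (lt_of_mem_boxHeights (fun q' hq' => hl q' (List.mem_cons_of_mem q hq')) h).ne rfl
    simpa [boxHeights, count_map_sub, hl'] using count_columnHeights_le_one q (p - 1)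

lemma count_boxHeights_one_sub_length_le (l : List ℕ) :
    (boxHeights l).count (1 - (l.length : ℤ)) ≤ 1 := by
  induction l with
  | nil => simp [boxHeights]
  | cons q l ih =>
    rcases eq_or_ne l [] with rfl | hl
    · simpa [boxHeights] using count_columnHeights_le_one q 0
    · have hq : (columnHeights q).count (-(l.length : ℤ)) = 0 :=
        Multiset.count_eq_zero.mpr <| by simp [columnHeights, hl]
      simpa [boxHeights, count_map_sub, hq, neg_add_eq_sub] using ih

namespace IsPartitionOf

variable {n : ℕ} {μ : List ℕ}

lemma le_of_mem (hμ : IsPartitionOf n μ) {q : ℕ} (hq : q ∈ μ) : q ≤ n :=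
  hμ.2.2 ▸ List.le_sum_of_mem hq

lemma length_le (hμ : IsPartitionOf n μ) : μ.length ≤ n :=
  hμ.2.2 ▸ μ.length_le_sum_of_one_le hμ.2.1

lemma natAbs_lt_of_mem_boxHeights (hμ : IsPartitionOf n μ) {a : ℤ} (ha : a ∈ boxHeights μ) :
    a.natAbs < n := by
  have := lt_of_mem_boxHeights (fun q hq => hμ.le_of_mem hq) ha
  have := neg_length_lt_of_mem_boxHeights ha
  have := hμ.length_le
  omega

lemma count_boxHeights_le_one (hμ : IsPartitionOf n μ) {a : ℤ} (ha : a.natAbs + 1 = n) :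
    (boxHeights μ).count a ≤ 1 := by
  rcases le_or_gt 0 a with ha₀ | ha₀
  · obtain rfl : a = (n : ℤ) - 1 := by omega
    exact count_boxHeights_sub_one_le fun q hq => hμ.le_of_mem hq
  rcases hμ.length_le.eq_or_lt with hlen | hlen
  · obtain rfl : a = 1 - (μ.length : ℤ) := by omega
    exact count_boxHeights_one_sub_length_le μ
  · rw [Multiset.count_eq_zero.mpr fun h => ?_]
    · exact zero_le_one
    have := neg_length_lt_of_mem_boxHeights h
    omega

lemma natAbs_apply_lt {ι : Type*} [Fintype ι] (hμ : IsPartitionOf n μ) {h : ι → ℤ}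
    (hh : univ.val.map h = boxHeights μ) (i : ι) : (h i).natAbs < n :=
  hμ.natAbs_lt_of_mem_boxHeights (hh ▸ Multiset.mem_map_of_mem h (mem_univ i))

/-- The `+ 1` holds because two distinct boxes cannot both have height `n - 1`, nor both `1 - n`. -/
lemma natAbs_add_add_one_le {ι : Type*} [Fintype ι] (hμ : IsPartitionOf n μ) {h : ι → ℤ}
    (hh : univ.val.map h = boxHeights μ) {i j : ι} (hij : i ≠ j) :
    (h i + h j).natAbs + 1 ≤ 2 * (n - 1) := by
  have hi := hμ.natAbs_apply_lt hh i
  have hj := hμ.natAbs_apply_lt hh j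
  by_contra hlt
  have hcount := hμ.count_boxHeights_le_one (a := h i) (by omega)
  rw [← hh, count_map_univ] at hcount
  have hji : h j = h i := by omega
  exact hcount.not_gt (one_lt_card.mpr ⟨i, by simp, j, by simp [hji], hij⟩)

end IsPartitionOf

namespace BnGeneric

variable {n : ℕ} {k₁ k₂ : ℝ}

lemma k₁_ne_zero (hgen : BnGeneric n k₁ k₂) : k₁ ≠ 0 :=
  left_ne_zero_of_mul (left_ne_zero_of_mul hgen)

lemma intCast_mul_add_ne_zero (hgen : BnGeneric n k₁ k₂) {m : ℤ}
    (hm : m.natAbs ≤ 2 * (n - 1)) : (m : ℝ) * k₁ + 2 * k₂ ≠ 0 := by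
  rcases eq_or_ne m 0 with rfl | hm₀
  · simpa using right_ne_zero_of_mul (left_ne_zero_of_mul hgen)
  have hfac := prod_ne_zero_iff.mp (right_ne_zero_of_mul hgen) m.natAbs
    (mem_Icc.mpr ⟨Int.natAbs_pos.mpr hm₀, hm⟩)
  rw [Nat.cast_natAbs, Int.cast_abs] at hfac
  rcases abs_choice (m : ℝ) with h | h <;> rw [h] at hfac
  · exact left_ne_zero_of_mul hfac
  · intro h0
    exact right_ne_zero_of_mul hfac (by linarith)

lemma ne_of_sub_eq (hgen : BnGeneric n k₁ k₂) {m : ℤ} (hm : m.natAbs ≤ 2 * (n - 1)) {c d : ℝ}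
    (hcd : c - d = m * k₁ + 2 * k₂) : c ≠ d := fun h =>
  hgen.intCast_mul_add_ne_zero hm (by rw [← hcd, h, sub_self])

end BnGeneric

section RootSystem

variable {n : ℕ}

@[simp] lemma evalRoot_stdE (i : Fin n) (x : Fin n → ℝ) : evalRoot n (stdE n i) x = x i := by
  simp [evalRoot, stdE, Pi.single_apply]

@[simp] lemma evalRoot_add (u v x : Fin n → ℝ) :
    evalRoot n (u + v) x = evalRoot n u x + evalRoot n v x :=
  add_dotProduct u v x

@[simp] lemma evalRoot_sub (u v x : Fin n → ℝ) :
    evalRoot n (u - v) x = evalRoot n u x - evalRoot n v x :=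
  sub_dotProduct u v x

@[simp] lemma evalRoot_neg (u x : Fin n → ℝ) : evalRoot n (-u) x = -evalRoot n u x :=
  neg_dotProduct u x

@[simp] lemma stdE_apply_self (i : Fin n) : stdE n i i = 1 := Pi.single_eq_same i 1

lemma stdE_apply_of_ne {i j : Fin n} (hij : i ≠ j) : stdE n j i = 0 := Pi.single_eq_of_ne hij 1

lemma stdE_injective : Function.Injective (stdE n) := fun i j h => by
  by_contra hij
  simpa [stdE_apply_of_ne hij] using congrFun h i

/-- Short roots have squared length `1`, long roots squared length `2`. -/
lemma kBn_of_evalRoot_self_ne_one (k₁ k₂ : ℝ) {v : Fin n → ℝ} (hv : evalRoot n v v ≠ 1) :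
    kBn n k₁ k₂ v = k₁ := by
  refine if_neg ?_
  rintro ⟨m, rfl | rfl⟩ <;> simp at hv

@[simp] lemma kBn_stdE (k₁ k₂ : ℝ) (i : Fin n) : kBn n k₁ k₂ (stdE n i) = k₂ :=
  if_pos ⟨i, .inl rfl⟩

@[simp] lemma kBn_neg_stdE (k₁ k₂ : ℝ) (i : Fin n) : kBn n k₁ k₂ (-stdE n i) = k₂ :=
  if_pos ⟨i, .inr rfl⟩

lemma evalRoot_stdE_add_stdE_self {i j : Fin n} (hij : i ≠ j) :
    evalRoot n (stdE n i + stdE n j) (stdE n i + stdE n j) = 2 := by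
  simp [stdE_apply_of_ne hij, stdE_apply_of_ne hij.symm]
  norm_num

lemma evalRoot_stdE_sub_stdE_self {i j : Fin n} (hij : i ≠ j) :
    evalRoot n (stdE n i - stdE n j) (stdE n i - stdE n j) = 2 := by
  simp [stdE_apply_of_ne hij, stdE_apply_of_ne hij.symm]
  norm_num

lemma kBn_stdE_add_stdE (k₁ k₂ : ℝ) {i j : Fin n} (hij : i ≠ j) :
    kBn n k₁ k₂ (stdE n i + stdE n j) = k₁ :=
  kBn_of_evalRoot_self_ne_one k₁ k₂ (by rw [evalRoot_stdE_add_stdE_self hij]; norm_num)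

lemma kBn_neg_stdE_add_stdE (k₁ k₂ : ℝ) {i j : Fin n} (hij : i ≠ j) :
    kBn n k₁ k₂ (-(stdE n i + stdE n j)) = k₁ :=
  kBn_of_evalRoot_self_ne_one k₁ k₂ <| by
    change -_ ⬝ᵥ -_ ≠ _
    rw [neg_dotProduct, dotProduct_neg, neg_neg]
    exact (evalRoot_stdE_add_stdE_self hij).trans_ne (by norm_num)

lemma kBn_stdE_sub_stdE (k₁ k₂ : ℝ) {i j : Fin n} (hij : i ≠ j) :
    kBn n k₁ k₂ (stdE n i - stdE n j) = k₁ :=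
  kBn_of_evalRoot_self_ne_one k₁ k₂ (by rw [evalRoot_stdE_sub_stdE_self hij]; norm_num)

lemma stdE_ne_stdE_sub_stdE (m : Fin n) {i j : Fin n} (hij : i ≠ j) :
    stdE n m ≠ stdE n i - stdE n j := fun h => by
  have := evalRoot_stdE_sub_stdE_self hij
  rw [← h] at this
  norm_num at this

lemma injOn_stdE_sub_stdE :
    Set.InjOn (fun q : Fin n × Fin n => stdE n q.1 - stdE n q.2) {q | q.1 ≠ q.2} := by
  rintro ⟨i, j⟩ hij ⟨i', j'⟩ hij' h
  simp only [Set.mem_ofPred_eq] at hij hij' h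
  have hi : i = i' := by
    by_contra hii'
    have := congrFun h i
    rcases eq_or_ne i j' with rfl | hij''
    · simp [stdE_apply_of_ne hij, stdE_apply_of_ne hii'] at this
      norm_num at this
    · simp [stdE_apply_of_ne hij, stdE_apply_of_ne hii', stdE_apply_of_ne hij''] at this
  subst hi
  rw [stdE_injective (sub_right_injective h)]

end RootSystem

section RootCount

variable {n : ℕ} {k₁ k₂ : ℝ} {x : Fin n → ℝ}

lemma setOf_evalRoot_eq_kBn (hk₁ : k₁ ≠ 0) (hneg : ∀ i, x i ≠ -k₂)
    (hlong : ∀ i j, i ≠ j → x i + x j ≠ k₁ ∧ x i + x j ≠ -k₁) :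
    {α ∈ rootsBn n | evalRoot n α x = kBn n k₁ k₂ α} =
      stdE n '' {i | x i = k₂} ∪
        (fun q : Fin n × Fin n => stdE n q.1 - stdE n q.2) '' {q | x q.1 = x q.2 + k₁} := by
  ext α
  constructor
  · rintro ⟨⟨i, j, hij, rfl | rfl | rfl⟩ | ⟨i, rfl | rfl⟩, he⟩
    · simp only [evalRoot_add, evalRoot_stdE, kBn_stdE_add_stdE k₁ k₂ hij] at he
      exact absurd he (hlong i j hij).1
    · simp only [evalRoot_sub, evalRoot_stdE, kBn_stdE_sub_stdE k₁ k₂ hij] at he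
      exact .inr ⟨(i, j), by simp only [Set.mem_ofPred_eq]; linarith, rfl⟩
    · rw [kBn_neg_stdE_add_stdE k₁ k₂ hij] at he
      simp only [evalRoot_neg, evalRoot_add, evalRoot_stdE] at he
      exact absurd (by linarith) (hlong i j hij).2
    · exact .inl ⟨i, by simpa using he, rfl⟩
    · simp only [evalRoot_neg, evalRoot_stdE, kBn_neg_stdE] at he
      exact absurd (by linarith) (hneg i)
  · rintro (⟨i, hi, rfl⟩ | ⟨⟨i, j⟩, hij, rfl⟩)
    · exact ⟨.inr ⟨i, .inl rfl⟩, by simpa using hi⟩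
    · simp only [Set.mem_ofPred_eq] at hij
      have hne : i ≠ j := by rintro rfl; exact hk₁ (by linarith)
      refine ⟨.inl ⟨i, j, hne, .inr (.inl rfl)⟩, ?_⟩
      simp only [evalRoot_sub, evalRoot_stdE, kBn_stdE_sub_stdE k₁ k₂ hne]
      linarith

lemma setOf_evalRoot_eq_zero (hsum : ∀ i j, x i + x j ≠ 0) :
    {α ∈ rootsBn n | evalRoot n α x = 0} =
      (fun q : Fin n × Fin n => stdE n q.1 - stdE n q.2) '' {q | q.1 ≠ q.2 ∧ x q.1 = x q.2} := by
  ext α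
  constructor
  · rintro ⟨⟨i, j, hij, rfl | rfl | rfl⟩ | ⟨i, rfl | rfl⟩, he⟩ <;>
      simp only [evalRoot_add, evalRoot_sub, evalRoot_neg, evalRoot_stdE] at he
    · exact absurd he (hsum i j)
    · exact ⟨(i, j), ⟨hij, by linarith⟩, rfl⟩
    · exact absurd (by linarith) (hsum i j)
    · exact absurd (by linarith) (hsum i i)
    · exact absurd (by linarith) (hsum i i)
  · rintro ⟨⟨i, j⟩, ⟨hij, he⟩, rfl⟩
    exact ⟨.inl ⟨i, j, hij, .inr (.inl rfl)⟩, by simpa [sub_eq_zero] using he⟩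

lemma ncard_setOf_evalRoot_eq_kBn (hk₁ : k₁ ≠ 0) (hneg : ∀ i, x i ≠ -k₂)
    (hlong : ∀ i j, i ≠ j → x i + x j ≠ k₁ ∧ x i + x j ≠ -k₁) :
    {α ∈ rootsBn n | evalRoot n α x = kBn n k₁ k₂ α}.ncard =
      #{i | x i = k₂} + #{q : Fin n × Fin n | x q.1 = x q.2 + k₁} := by
  have hoff : {q : Fin n × Fin n | x q.1 = x q.2 + k₁} ⊆ {q | q.1 ≠ q.2} := by
    intro q hq hdiag
    simp only [Set.mem_ofPred_eq, hdiag] at hq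
    exact hk₁ (by linarith)
  have hdisj : Disjoint (stdE n '' {i | x i = k₂})
      ((fun q : Fin n × Fin n => stdE n q.1 - stdE n q.2) '' {q | x q.1 = x q.2 + k₁}) := by
    rw [Set.disjoint_left]
    rintro _ ⟨m, -, rfl⟩ ⟨q, hq, hmq⟩
    exact stdE_ne_stdE_sub_stdE m (hoff hq) hmq.symm
  rw [setOf_evalRoot_eq_kBn hk₁ hneg hlong, Set.ncard_union_eq hdisj,
    Set.ncard_image_of_injective _ stdE_injective,
    (injOn_stdE_sub_stdE.mono hoff).ncard_image]
  simp [Set.ncard_eq_toFinset_card']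

lemma ncard_setOf_evalRoot_eq_zero (hsum : ∀ i j, x i + x j ≠ 0) :
    {α ∈ rootsBn n | evalRoot n α x = 0}.ncard =
      #{q : Fin n × Fin n | q.1 ≠ q.2 ∧ x q.1 = x q.2} := by
  rw [setOf_evalRoot_eq_zero hsum,
    (injOn_stdE_sub_stdE.mono fun q hq => hq.1).ncard_image]
  simp [Set.ncard_eq_toFinset_card']

end RootCount

lemma coe_flatMap_zipIdx (k₁ k₂ : ℝ) (l : List ℕ) (m : ℕ) :
    (↑((l.zipIdx m).flatMap fun p =>
        (List.range p.1).map fun j => ((j : ℝ) - (p.2 : ℝ)) * k₁ + k₂) : Multiset ℝ) =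
      (boxHeights l).map fun a : ℤ => ((a - m : ℤ) : ℝ) * k₁ + k₂ := by
  induction l generalizing m with
  | nil => simp [boxHeights]
  | cons p l ih =>
    rw [List.zipIdx_cons, List.flatMap_cons, ← Multiset.coe_add, ih, boxHeights,
      Multiset.map_add, Multiset.map_map, columnHeights, Multiset.map_map, ← Multiset.coe_range,
      Multiset.map_coe]
    congr 1
    · simp [← List.map_eq_flatMap, Function.comp_def]
    · refine Multiset.map_congr rfl fun a _ => ?_
      simp only [Function.comp_apply]
      push_cast
      ring

lemma heightCoords_eq_map_boxHeights (k₁ k₂ : ℝ) (l : List ℕ) :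
    heightCoords k₁ k₂ l = (boxHeights l).map fun a : ℤ => (a : ℝ) * k₁ + k₂ := by
  simpa [heightCoords] using coe_flatMap_zipIdx k₁ k₂ l 0

lemma IsLambdaVec.exists_heights {n : ℕ} {k₁ k₂ : ℝ} {μ : List ℕ} {x : Fin n → ℝ}
    (hk₁ : k₁ ≠ 0) (hx : IsLambdaVec n k₁ k₂ μ x) :
    ∃ h : Fin n → ℤ, x = (fun i => (h i : ℝ) * k₁ + k₂) ∧ univ.val.map h = boxHeights μ := by
  set φ : ℤ → ℝ := fun a => a * k₁ + k₂
  have hφ : Function.Injective φ := fun a b hab => by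
    simpa [φ, hk₁] using hab
  rw [IsLambdaVec, heightCoords_eq_map_boxHeights, ← Fin.univ_val_map] at hx
  have hmem (i : Fin n) : x i ∈ (boxHeights μ).map φ := hx ▸ Multiset.mem_map_of_mem x (mem_univ i)
  choose h _ hxh using fun i => Multiset.mem_map.mp (hmem i)
  have hx' : x = φ ∘ h := funext fun i => (hxh i).symm
  refine ⟨h, hx', Multiset.map_injective hφ ?_⟩
  rw [Multiset.map_map, ← hx', hx]

section Heights

variable {n : ℕ} {k₁ k₂ : ℝ} {μ : List ℕ} {h : Fin n → ℤ}

lemma heightCoord_inj (hk₁ : k₁ ≠ 0) {a b : ℤ} : (a : ℝ) * k₁ + k₂ = b * k₁ + k₂ ↔ a = b := by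
  simp [hk₁]

lemma ncard_setOf_evalRoot_heights_eq_kBn (hgen : BnGeneric n k₁ k₂) (hμ : IsPartitionOf n μ)
    (hh : univ.val.map h = boxHeights μ) :
    {α ∈ rootsBn n | evalRoot n α (fun i => (h i : ℝ) * k₁ + k₂) = kBn n k₁ k₂ α}.ncard =
      (boxHeights μ).count 0 + pairCount (boxHeights μ) (boxHeights μ) 1 := by
  have hk₁ := hgen.k₁_ne_zero
  have hlong {i j : Fin n} (hij : i ≠ j) := hμ.natAbs_add_add_one_le hh hij
  rw [ncard_setOf_evalRoot_eq_kBn hk₁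
    (fun i => hgen.ne_of_sub_eq (m := h i) (by have := hμ.natAbs_apply_lt hh i; omega) (by ring))
    (fun i j hij => ⟨hgen.ne_of_sub_eq (m := h i + h j - 1) (by have := hlong hij; omega)
      (by push_cast; ring), hgen.ne_of_sub_eq (m := h i + h j + 1) (by have := hlong hij; omega)
      (by push_cast; ring)⟩), ← hh, count_map_univ, pairCount_map_univ]
  congr 2 <;> ext q <;> simp only [mem_filter, mem_univ, true_and]
  · simp [hk₁]
  · rw [show (h q.2 : ℝ) * k₁ + k₂ + k₁ = ((h q.2 + 1 : ℤ) : ℝ) * k₁ + k₂ by push_cast; ring,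
      heightCoord_inj hk₁]

lemma ncard_setOf_evalRoot_heights_eq_zero_add (hgen : BnGeneric n k₁ k₂) (hμ : IsPartitionOf n μ)
    (hh : univ.val.map h = boxHeights μ) :
    {α ∈ rootsBn n | evalRoot n α (fun i => (h i : ℝ) * k₁ + k₂) = 0}.ncard + n =
      pairCount (boxHeights μ) (boxHeights μ) 0 := by
  have hk₁ := hgen.k₁_ne_zero
  have hsum (i j : Fin n) : (h i + h j).natAbs ≤ 2 * (n - 1) := by
    rcases eq_or_ne i j with rfl | hij
    · have := hμ.natAbs_apply_lt hh i
      omega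
    · have := hμ.natAbs_add_add_one_le hh hij
      omega
  rw [ncard_setOf_evalRoot_eq_zero fun i j => hgen.ne_of_sub_eq (hsum i j) (by push_cast; ring),
    ← hh, pairCount_map_univ]
  simp only [heightCoord_inj hk₁, add_zero]
  rw [card_filter_eq_card_filter_ne_add, Fintype.card_fin]

end Heights

theorem stmt_16_general (n : ℕ) (k₁ k₂ : ℝ) (hgen : BnGeneric n k₁ k₂)
    (μ : List ℕ) (hμ : IsPartitionOf n μ) (x : Fin n → ℝ) (hx : IsLambdaVec n k₁ k₂ μ x) :
    {α ∈ rootsBn n | evalRoot n α x = kBn n k₁ k₂ α}.ncard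
      = {α ∈ rootsBn n | evalRoot n α x = 0}.ncard + n := by
  obtain ⟨h, rfl, hh⟩ := hx.exists_heights hgen.k₁_ne_zero
  rw [ncard_setOf_evalRoot_heights_eq_kBn hgen hμ hh,
    ncard_setOf_evalRoot_heights_eq_zero_add hgen hμ hh, pairCount_boxHeights hμ.1]

theorem stmt_16 (n : ℕ) (hn : 1 ≤ n) (k₁ k₂ : ℝ) (hgen : BnGeneric n k₁ k₂)
    (μ : List ℕ) (hμ : IsPartitionOf n μ) (x : Fin n → ℝ) (hx : IsLambdaVec n k₁ k₂ μ x) :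
    {α ∈ rootsBn n | evalRoot n α x = kBn n k₁ k₂ α}.ncard
      = {α ∈ rootsBn n | evalRoot n α x = 0}.ncard + n :=
  stmt_16_general n k₁ k₂ hgen μ hμ x hx

end
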